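/- arXiv:1403.5739 — 4 statements merged into one kernel-verified Lean document; each statement's English description precedes it below -/
import Mathlib

section
/- For an odd prime D, if 2/D = 1/a + 1/b with positive integers a < b, then a = (D+1)/2 and b = D(D+1)/2. That is, the two-term unit fraction decomposition of 2/D with distinct denominators is unique. -/
/-! With `x = 2a - D` and `y = 2b - D`, the equation `2/D = 1/a + 1/b` becomes `x * y = D ^ 2`,
and `a < b` forces `0 < x < y`. The only such factorisation of the square of a prime is
`x = 1`, `y = D ^ 2`. -/

theorem two_mul_mul_eq_mul_add_of_two_div_eq {n a b : ℕ} (hn : n ≠ 0) (ha : a ≠ 0) (hb : b ≠ 0)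
    (h : (2 : ℚ) / n = 1 / a + 1 / b) : 2 * a * b = n * (a + b) := by
  have hq : (2 * a * b : ℚ) = n * (a + b) := by
    field_simp at h
    linarith
  exact_mod_cast hq

theorem lt_two_mul_of_two_mul_mul_eq {n a b : ℕ} (ha : 0 < a) (h : 2 * a * b = n * (a + b)) :
    n < 2 * a := by
  by_contra! hle
  nlinarith

theorem two_mul_sub_mul_two_mul_sub_eq_sq {n a b : ℕ} (ha : n ≤ 2 * a) (hb : n ≤ 2 * b)
    (h : 2 * a * b = n * (a + b)) : (2 * a - n) * (2 * b - n) = n ^ 2 := by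
  zify [ha, hb] at h ⊢
  linear_combination 2 * h

theorem Nat.eq_one_of_mul_eq_prime_sq_of_lt {p x y : ℕ} (hp : p.Prime) (hxy : x * y = p ^ 2)
    (hlt : x < y) : x = 1 := by
  obtain ⟨i, hi, rfl⟩ := (Nat.dvd_prime_pow hp).mp (Dvd.intro y hxy)
  have hp0 := hp.pos
  interval_cases i
  · simp
  · have : y = p := by nlinarith
    simp_all
  · have : y = 1 := by nlinarith
    have := hp.one_lt
    nlinarith

theorem two_term_unique_general (D a b : ℕ) (hD : D.Prime)
    (ha : 0 < a) (hab : a < b)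
    (h : (2 : ℚ) / D = 1 / a + 1 / b) :
    a = (D + 1) / 2 ∧ b = D * (D + 1) / 2 := by
  have hb : 0 < b := ha.trans hab
  have key := two_mul_mul_eq_mul_add_of_two_div_eq hD.ne_zero ha.ne' hb.ne' h
  have hDa : D < 2 * a := lt_two_mul_of_two_mul_mul_eq ha key
  have hDb : D < 2 * b :=
    lt_two_mul_of_two_mul_mul_eq hb (by linarith : 2 * b * a = D * (b + a))
  have hprod := two_mul_sub_mul_two_mul_sub_eq_sq hDa.le hDb.le key
  have hx : 2 * a - D = 1 := Nat.eq_one_of_mul_eq_prime_sq_of_lt hD hprod (by omega)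
  rw [hx, one_mul] at hprod
  have hsq : D * (D + 1) = D ^ 2 + D := by ring
  omega

theorem two_term_unique (D a b : ℕ) (hD : D.Prime) (hodd : Odd D)
    (ha : 0 < a) (hab : a < b)
    (h : (2 : ℚ) / D = 1 / a + 1 / b) :
    a = (D + 1) / 2 ∧ b = D * (D + 1) / 2 :=
  two_term_unique_general D a b hD ha hab h
end

section
/- Let D be an odd positive integer and D₁ a positive integer, and let d₂, d₃ be positive divisors of D₁ such that 2·D₁ = D + d₂ + d₃. Then 2/D = 1/D₁ + 1/((D₁/d₂)·D) + 1/((D₁/d₃)·D). -/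
/-! With `D₁ = (D₁ / d) * d`, the term `1 / ((D₁ / d) * D)` equals `d / (D₁ * D)`, so the right-hand
side is `(D + d₂ + d₃) / (D₁ * D) = 2 * D₁ / (D₁ * D) = 2 / D`. -/

theorem one_div_div_mul {K : Type*} [Field K] (x y z : K) : 1 / (x / y * z) = y / (x * z) := by
  rw [div_mul_eq_mul_div, one_div_div]

theorem two_div_eq_one_div_add_div_add_div {K : Type*} [Field K] {D D₁ d₂ d₃ : K} (hD : D ≠ 0)
    (hD₁ : D₁ ≠ 0) (hsum : 2 * D₁ = D + d₂ + d₃) :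
    2 / D = 1 / D₁ + d₂ / (D₁ * D) + d₃ / (D₁ * D) := by
  field_simp
  linear_combination hsum

theorem three_term_scheme_general (D D₁ d₂ d₃ : ℕ) (hDpos : 0 < D)
    (hD₁ : 0 < D₁)
    (hdvd₂ : d₂ ∣ D₁) (hdvd₃ : d₃ ∣ D₁)
    (hsum : 2 * D₁ = D + d₂ + d₃) :
    (2 : ℚ) / D = 1 / D₁ + 1 / ((D₁ / d₂ : ℕ) * D) + 1 / ((D₁ / d₃ : ℕ) * D) := by
  rw [Nat.cast_div_charZero hdvd₂, Nat.cast_div_charZero hdvd₃, one_div_div_mul, one_div_div_mul]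
  exact two_div_eq_one_div_add_div_add_div (by positivity) (by positivity) (by exact_mod_cast hsum)

theorem three_term_scheme (D D₁ d₂ d₃ : ℕ) (hD : Odd D) (hDpos : 0 < D)
    (hD₁ : 0 < D₁) (hd₂ : 0 < d₂) (hd₃ : 0 < d₃)
    (hdvd₂ : d₂ ∣ D₁) (hdvd₃ : d₃ ∣ D₁)
    (hsum : 2 * D₁ = D + d₂ + d₃) :
    (2 : ℚ) / D = 1 / D₁ + 1 / ((D₁ / d₂ : ℕ) * D) + 1 / ((D₁ / d₃ : ℕ) * D) :=
  three_term_scheme_general D D₁ d₂ d₃ hDpos hD₁ hdvd₂ hdvd₃ hsum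
end

section
/- Let D be an odd positive integer and D₁ a positive integer, and let d₂, d₃, d₄ be positive divisors of D₁ such that 2·D₁ = D + d₂ + d₃ + d₄. Then 2/D = 1/D₁ + 1/((D₁/d₂)·D) + 1/((D₁/d₃)·D) + 1/((D₁/d₄)·D). -/
/-! With `eᵢ = D₁ / dᵢ` exact, `1 / (eᵢ D) = dᵢ / (D₁ D)`, so the right-hand side equals
`(D + d₂ + d₃ + d₄) / (D₁ D) = 2 D₁ / (D₁ D) = 2 / D`. -/

theorem one_div_natCast_div_mul {K : Type*} [Field K] [CharZero K] {n d : ℕ} (h : d ∣ n)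
    (x : K) : 1 / (((n / d : ℕ) : K) * x) = d / (n * x) := by
  rw [Nat.cast_div_charZero h]
  simp only [div_eq_mul_inv, mul_inv, inv_inv]
  ring

theorem div_eq_one_div_add_div_mul {K : Type*} [Field K] {a D D₁ s : K} (hD : D ≠ 0)
    (hD₁ : D₁ ≠ 0) (h : a * D₁ = D + s) : a / D = 1 / D₁ + s / (D₁ * D) := by
  field_simp
  linear_combination h

theorem four_term_scheme_general (D D₁ d₂ d₃ d₄ : ℕ) (hDpos : 0 < D)
    (hdvd₂ : d₂ ∣ D₁) (hdvd₃ : d₃ ∣ D₁) (hdvd₄ : d₄ ∣ D₁)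
    (hsum : 2 * D₁ = D + d₂ + d₃ + d₄) :
    (2 : ℚ) / D = 1 / D₁ + 1 / ((D₁ / d₂ : ℕ) * D) + 1 / ((D₁ / d₃ : ℕ) * D)
      + 1 / ((D₁ / d₄ : ℕ) * D) := by
  have hD : (D : ℚ) ≠ 0 := by positivity
  have hD₁ : (D₁ : ℚ) ≠ 0 := by norm_cast; omega
  have hsumℚ : (2 : ℚ) * D₁ = D + (d₂ + d₃ + d₄) := by norm_cast; omega
  rw [div_eq_one_div_add_div_mul hD hD₁ hsumℚ, one_div_natCast_div_mul hdvd₂,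
    one_div_natCast_div_mul hdvd₃, one_div_natCast_div_mul hdvd₄, add_div, add_div]
  ring

theorem four_term_scheme (D D₁ d₂ d₃ d₄ : ℕ) (hD : Odd D) (hDpos : 0 < D)
    (hD₁ : 0 < D₁) (hd₂ : 0 < d₂) (hd₃ : 0 < d₃) (hd₄ : 0 < d₄)
    (hdvd₂ : d₂ ∣ D₁) (hdvd₃ : d₃ ∣ D₁) (hdvd₄ : d₄ ∣ D₁)
    (hsum : 2 * D₁ = D + d₂ + d₃ + d₄) :
    (2 : ℚ) / D = 1 / D₁ + 1 / ((D₁ / d₂ : ℕ) * D) + 1 / ((D₁ / d₃ : ℕ) * D)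
      + 1 / ((D₁ / d₄ : ℕ) * D) :=
  four_term_scheme_general D D₁ d₂ d₃ d₄ hDpos hdvd₂ hdvd₃ hdvd₄ hsum
end

section
/- Suppose D is an odd prime and 2/D = 1/D₁ + 1/D₂ + 1/D₃ with positive integers D₁ < D₂ < D₃ where D does not divide D₁. Then at least one of D₂, D₃ is a multiple of D. -/
theorem multiple_of_D (D D₁ D₂ D₃ : ℕ) (hD : D.Prime) (hodd : Odd D)
    (h1 : 0 < D₁) (h12 : D₁ < D₂) (h23 : D₂ < D₃)
    (heq : (2 : ℚ) / D = 1 / D₁ + 1 / D₂ + 1 / D₃)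
    (hnd : ¬ D ∣ D₁) :
    D ∣ D₂ ∨ D ∣ D₃ := by
  have hDpos : 0 < D := hD.pos
  have h2 : 0 < D₂ := lt_trans h1 h12
  have h3 : 0 < D₃ := lt_trans h2 h23
  have hDq : (D : ℚ) ≠ 0 := by positivity
  have h1q : (D₁ : ℚ) ≠ 0 := by positivity
  have h2q : (D₂ : ℚ) ≠ 0 := by positivity
  have h3q : (D₃ : ℚ) ≠ 0 := by positivity
  have key : 2 * D₁ * D₂ * D₃ = D * (D₂ * D₃ + D₁ * D₃ + D₁ * D₂) := by
    have hq : (2 * D₁ * D₂ * D₃ : ℚ) = D * (D₂ * D₃ + D₁ * D₃ + D₁ * D₂) := by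
      field_simp at heq
      linarith [heq]
    exact_mod_cast hq
  have hdvd : D ∣ 2 * D₁ * D₂ * D₃ := ⟨_, key⟩
  have hD2 : ¬ D ∣ 2 := by
    intro h
    have := (Nat.prime_dvd_prime_iff_eq hD Nat.prime_two).mp h
    subst this
    exact (Nat.not_odd_iff_even.mpr (by decide)) hodd
  rcases (hD.dvd_mul.mp hdvd) with h | h
  · rcases (hD.dvd_mul.mp h) with h' | h'
    · rcases (hD.dvd_mul.mp h') with h'' | h''
      · exact absurd h'' hD2
      · exact absurd h'' hnd
    · exact Or.inl h'
  · exact Or.inr h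
end
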